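/- Let V be a real inner product space with compatible almost complex structure I and Hermitian form ω(x,y) = ⟨Ix, y⟩. Then for any orthonormal pair e₁, e₂ ∈ V, one has |ω(e₁, e₂)| ≤ 1, with equality if and only if the span of e₁, e₂ is I-invariant. -/
import Mathlib


open scoped RealInnerProductSpace

/-- Wirtinger inequality: on a real inner product space with compatible almost
complex structure `I` and Hermitian form `ω(x,y) = ⟪Ix, y⟫`, any orthonormal
pair `e₁, e₂` satisfies `|ω(e₁,e₂)| ≤ 1`, with equality iff the span of
`e₁, e₂` is `I`-invariant. -/
theorem wirtinger_inequality
    {V : Type*} [NormedAddCommGroup V] [InnerProductSpace ℝ V]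
    (I : V →ₗ[ℝ] V) (hI2 : ∀ v, I (I v) = -v)
    (hIiso : ∀ x y : V, ⟪I x, I y⟫ = ⟪x, y⟫)
    (ω : V → V → ℝ) (hω : ∀ x y, ω x y = ⟪I x, y⟫)
    (e₁ e₂ : V) (h1 : ‖e₁‖ = 1) (h2 : ‖e₂‖ = 1) (h12 : ⟪e₁, e₂⟫ = 0) :
    |ω e₁ e₂| ≤ 1 ∧
    (|ω e₁ e₂| = 1 ↔
      Submodule.map I (Submodule.span ℝ {e₁, e₂}) = Submodule.span ℝ {e₁, e₂}) := by
  have hnorm : ∀ v : V, ‖I v‖ = ‖v‖ := by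
    intro v
    have := hIiso v v
    rw [real_inner_self_eq_norm_mul_norm, real_inner_self_eq_norm_mul_norm] at this
    nlinarith [norm_nonneg (I v), norm_nonneg v]
  have hIe1 : ‖I e₁‖ = 1 := by rw [hnorm, h1]
  have hskew : ∀ x y : V, ⟪I x, y⟫ = -⟪x, I y⟫ := by
    intro x y
    have := hIiso x (I y)
    rw [hI2] at this
    rw [← this, inner_neg_right]
    ring
  have hle : |ω e₁ e₂| ≤ 1 := by
    rw [hω]
    calc |⟪I e₁, e₂⟫| ≤ ‖I e₁‖ * ‖e₂‖ := abs_real_inner_le_norm _ _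
    _ = 1 := by rw [hIe1, h2]; ring
  refine ⟨hle, ?_, ?_⟩
  · -- equality → invariant
    intro heq
    rw [hω] at heq
    have hx0 : I e₁ ≠ 0 := by
      intro h; rw [h, norm_zero] at hIe1; norm_num at hIe1
    have hy0 : e₂ ≠ 0 := by
      intro h; rw [h, norm_zero] at h2; norm_num at h2
    have : ‖(⟪I e₁, e₂⟫ : ℝ)‖ = ‖I e₁‖ * ‖e₂‖ := by
      rw [hIe1, h2, Real.norm_eq_abs, heq]; ring
    obtain ⟨r, hr0, hr⟩ := (norm_inner_eq_norm_iff hx0 hy0).mp this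
    have hr1 : |r| = 1 := by
      have hn := hnorm e₁
      rw [h1] at hn
      have h := congrArg norm hr
      rw [norm_smul, hn, h2, Real.norm_eq_abs] at h
      linarith [h]
    have hrr : r * r = 1 := by nlinarith [sq_abs r, hr1]
    have hIe₁ : I e₁ = r • e₂ := by
      rw [hr, smul_smul, hrr, one_smul]
    have hIe₂ : I e₂ = (-r) • e₁ := by
      have h' : I (I e₁) = I (r • e₂) := by rw [hIe₁]
      rw [hI2, map_smul] at h'
      have h2' : r • I e₂ = -e₁ := h'.symm
      calc I e₂ = (r*r) • I e₂ := by rw [hrr, one_smul]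
      _ = r • (r • I e₂) := by rw [smul_smul]
      _ = r • (-e₁) := by rw [h2']
      _ = (-r) • e₁ := by rw [neg_smul, smul_neg]
    apply le_antisymm
    · rw [Submodule.map_le_iff_le_comap, Submodule.span_le]
      rintro x (rfl | rfl)
      · refine Submodule.mem_comap.mpr ?_
        rw [hIe₁]
        exact Submodule.smul_mem _ _ (Submodule.subset_span (by simp))
      · refine Submodule.mem_comap.mpr ?_
        rw [hIe₂]
        exact Submodule.smul_mem _ _ (Submodule.subset_span (by simp))
    · rw [Submodule.span_le]
      rintro x (rfl | rfl)
      · refine ⟨(-r) • e₂, Submodule.smul_mem _ _ (Submodule.subset_span (by simp)), ?_⟩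
        rw [map_smul, hIe₂, smul_smul]
        rw [show (-r : ℝ) * -r = r * r by ring, hrr, one_smul]
      · refine ⟨r • e₁, Submodule.smul_mem _ _ (Submodule.subset_span (by simp)), ?_⟩
        rw [map_smul, hIe₁, smul_smul, hrr, one_smul]
  · -- invariant → equality
    intro hinv
    have hmem : I e₁ ∈ Submodule.span ℝ ({e₁, e₂} : Set V) := by
      rw [← hinv]
      exact ⟨e₁, Submodule.subset_span (by simp), rfl⟩
    rw [Submodule.mem_span_pair] at hmem
    obtain ⟨a, b, hab⟩ := hmem
    have ha : a = 0 := by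
      have h11 : (⟪I e₁, e₁⟫ : ℝ) = 0 := by
        have hs := hskew e₁ e₁
        have hc := real_inner_comm e₁ (I e₁)
        linarith [hs, hc]
      have hx : (⟪a • e₁ + b • e₂, e₁⟫ : ℝ) = 0 := by rw [hab]; exact h11
      rw [inner_add_left, inner_smul_left, inner_smul_left,
        real_inner_self_eq_norm_mul_norm, h1, real_inner_comm e₁ e₂, h12] at hx
      simpa using hx
    have hb : |b| = 1 := by
      have hn := hIe1
      rw [← hab, ha, zero_smul, zero_add, norm_smul, h2, Real.norm_eq_abs] at hn
      linarith [hn]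
    rw [hω, ← hab, ha, zero_smul, zero_add, inner_smul_left,
      real_inner_self_eq_norm_mul_norm, h2]
    simpa using hb
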